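/- arXiv:2507.12272 — 6 statements merged into one kernel-verified Lean document; each statement's English description precedes it below -/
import Mathlib

section
/- If F : X → 2^X is upper semicontinuous on a compact metric space X, then the union ⋃_{x ∈ X} O_F(x) of all orbit sets is a compact subset of X^ℕ. -/
open Set Topology Filter

variable {X : Type*}

/-- Iterates of a set-valued map: `IterF F 0 x = {x}`,
`IterF F (n+1) x = ⋃ y ∈ IterF F n x, F y`; so `IterF F k` is `F^k` for `k ≥ 1`. -/
def IterF (F : X → Set X) : ℕ → X → Set X
  | 0 => fun x => {x}
  | n + 1 => fun x => ⋃ y ∈ IterF F n x, F y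

/-- The orbit set of `z` under `F` (sequences indexed from `0`). -/
def OrbitSet (F : X → Set X) (z : X) : Set (ℕ → X) :=
  {u | u 0 = z ∧ ∀ n, u (n + 1) ∈ F (u n)}

/-- Upper semicontinuity of a set-valued function. -/
def USC [TopologicalSpace X] (F : X → Set X) : Prop :=
  ∀ x, ∀ V : Set X, IsOpen V → F x ⊆ V →
    ∃ U : Set X, IsOpen U ∧ x ∈ U ∧ ∀ y ∈ U, F y ⊆ V

/-- Lower semicontinuity of a set-valued function. -/
def LSC [TopologicalSpace X] (F : X → Set X) : Prop :=
  ∀ x, ∀ V : Set X, IsOpen V → (F x ∩ V).Nonempty →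
    ∃ U : Set X, IsOpen U ∧ x ∈ U ∧ ∀ y ∈ U, (F y ∩ V).Nonempty

/- The union of the orbit sets is the set of all `F`-chains, i.e. the sequences with
`(u n, u (n + 1))` in the graph of `F` for every `n`. The graph of a closed-valued upper
semicontinuous map is closed, so this set is closed in the compact space `X^ℕ`. -/

theorem USC.isClosed_setOf_mem [TopologicalSpace X] [RegularSpace X] {F : X → Set X}
    (hF : USC F) (hcl : ∀ x, IsClosed (F x)) : IsClosed {p : X × X | p.2 ∈ F p.1} := by
  refine isOpen_compl_iff.mp <| isOpen_iff_mem_nhds.mpr fun ⟨x, y⟩ hy => ?_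
  obtain ⟨V, hV, W, hW, hVW⟩ :=
    Filter.disjoint_iff.mp (disjoint_nhdsSet_nhds.mpr (by rwa [(hcl x).closure_eq]))
  obtain ⟨V', hV'open, hFV', hV'V⟩ := mem_nhdsSet_iff_exists.mp hV
  obtain ⟨U, hUopen, hxU, hU⟩ := hF x V' hV'open hFV'
  filter_upwards [prod_mem_nhds (hUopen.mem_nhds hxU) hW] with q ⟨hq₁, hq₂⟩ hq
  exact hVW.notMem_of_mem_right hq₂ (hV'V (hU _ hq₁ hq))

theorem isClosed_setOf_forall_succ_mem [TopologicalSpace X] {R : Set (X × X)} (hR : IsClosed R) :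
    IsClosed {u : ℕ → X | ∀ n, (u n, u (n + 1)) ∈ R} := by
  simp only [Set.ofPred_forall]
  exact isClosed_iInter fun n => hR.preimage (by fun_prop)

theorem iUnion_orbitSet (F : X → Set X) :
    ⋃ x, OrbitSet F x = {u : ℕ → X | ∀ n, u (n + 1) ∈ F (u n)} := by
  ext u
  simp [OrbitSet]

theorem stmt7_general [MetricSpace X] [CompactSpace X] (F : X → Set X)
    (hcl : ∀ x, IsClosed (F x)) (hF : USC F) :
    IsCompact (⋃ x : X, OrbitSet F x) := by
  rw [iUnion_orbitSet]
  exact (isClosed_setOf_forall_succ_mem (hF.isClosed_setOf_mem hcl)).isCompact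

/-- The union of all orbit sets of an upper semicontinuous map is compact in `X^ℕ`. -/
theorem stmt7 [MetricSpace X] [CompactSpace X] (F : X → Set X)
    (hne : ∀ x, (F x).Nonempty) (hcl : ∀ x, IsClosed (F x)) (hF : USC F) :
    IsCompact (⋃ x : X, OrbitSet F x) :=
  stmt7_general F hcl hF
end

section
/- Let X be a continuum and F : X → 2^X upper semicontinuous with F(x) connected for every x ∈ X. Then for each x ∈ X and each n ∈ ℕ, the set O_F(x)|_{[n]} = {(y_i) ∈ X^ℕ : y_1 = x and y_{i+1} ∈ F(y_i) for each i ≤ n−1} is compact and connected. -/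
open Set Topology Filter

variable {X : Type*}

/-!
A sequence in `O_F(x)|_[n+1]` is a sequence in `O_F(x)|_[n]` with its `(n+1)`-st term replaced by
a point of the connected set `F (u n)`. So `O_F(x)|_[n+1]` is a union of connected fibres over the
preconnected base `O_F(x)|_[n]`, and these fibres depend upper semicontinuously on the base point
(tube lemma, using compactness of the values). Such a union is preconnected: were it split by two
open sets, each fibre would lie in one of them, and the fibres inside either one form an open subset
of the base, splitting the base. Compactness holds because upper semicontinuity with closed values
makes the graph of `F` closed, so the partial orbit set is closed in the compact space `X^ℕ`.
-/

section Hemicontinuity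

variable {α β γ : Type*} [TopologicalSpace α] [TopologicalSpace β] [TopologicalSpace γ]

theorem USC.upperHemicontinuous [TopologicalSpace X] {F : X → Set X} (hF : USC F) :
    UpperHemicontinuous F :=
  .of_forall_isOpen fun x V hV hFV => by
    obtain ⟨U, hU, hxU, hUV⟩ := hF x V hV hFV
    exact eventually_of_mem (hU.mem_nhds hxU) hUV

theorem UpperHemicontinuous.isOpen_setOf_subset {f : α → Set β} (hf : UpperHemicontinuous f)
    {W : Set β} (hW : IsOpen W) : IsOpen {a | f a ⊆ W} :=
  isOpen_iff_eventually.mpr fun a ha => hf.forall_isOpen a W hW ha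

theorem UpperHemicontinuous.isClosed_setOf_mem [RegularSpace β] {f : α → Set β}
    (hf : UpperHemicontinuous f) (hcl : ∀ a, IsClosed (f a)) :
    IsClosed {p : α × β | p.2 ∈ f p.1} :=
  isClosed_iff_frequently.mpr fun p hp =>
    (upperHemicontinuous_iff.mp hf p.1).mem_of_tendsto (hcl p.1) continuous_fst.continuousAt hp
      continuous_snd.continuousAt

theorem UpperHemicontinuous.image_of_isCompact {f : α → Set β} (hf : UpperHemicontinuous f)
    (hcpt : ∀ a, IsCompact (f a)) {φ : α → β → γ}
    (hφ : Continuous (Function.uncurry φ)) :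
    UpperHemicontinuous fun a => φ a '' f a := by
  refine .of_forall_isOpen fun a W hW haW => ?_
  have hslice : {a} ×ˢ f a ⊆ Function.uncurry φ ⁻¹' W := by
    rintro ⟨a', b⟩ ⟨rfl, hb⟩
    exact haW (mem_image_of_mem _ hb)
  obtain ⟨U, V, hU, hV, haU, hfV, hUV⟩ :=
    generalized_tube_lemma isCompact_singleton (hcpt a) (hW.preimage hφ) hslice
  filter_upwards [hU.mem_nhds (haU rfl), hf.forall_isOpen a V hV hfV] with a' ha' hfa'
  rintro _ ⟨b, hb, rfl⟩
  exact hUV (mk_mem_prod ha' (hfa' hb))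

theorem IsPreconnected.biUnion_of_upperHemicontinuous {S : Set α} (hS : IsPreconnected S)
    {C : α → Set β} (hC : UpperHemicontinuous C) (hCS : ∀ a ∈ S, IsConnected (C a)) :
    IsPreconnected (⋃ a ∈ S, C a) := by
  rw [isPreconnected_iff_subset_of_disjoint] at hS ⊢
  intro U V hU hV hcover hdisj
  have hfibre : ∀ a ∈ S, C a ⊆ U ∨ C a ⊆ V := fun a ha =>
    have hCa : C a ⊆ ⋃ a ∈ S, C a := subset_biUnion_of_mem ha
    isPreconnected_iff_subset_of_disjoint.mp (hCS a ha).isPreconnected U V hU hV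
      (hCa.trans hcover) (subset_empty_iff.mp (hdisj ▸ inter_subset_inter_left _ hCa))
  have hbase_disj : S ∩ ({a | C a ⊆ U} ∩ {a | C a ⊆ V}) = ∅ := by
    refine eq_empty_of_forall_notMem fun a ⟨ha, haU, haV⟩ => ?_
    obtain ⟨b, hb⟩ := (hCS a ha).nonempty
    exact eq_empty_iff_forall_notMem.mp hdisj b ⟨mem_biUnion ha hb, haU hb, haV hb⟩
  rcases hS _ _ (hC.isOpen_setOf_subset hU) (hC.isOpen_setOf_subset hV) hfibre hbase_disj
    with hSU | hSV
  · exact .inl (iUnion₂_subset fun a ha => hSU ha)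
  · exact .inr (iUnion₂_subset fun a ha => hSV ha)

end Hemicontinuity

theorem isPreconnected_setOf_apply_eq {ι : Type*} [DecidableEq ι] {π : ι → Type*}
    [∀ i, TopologicalSpace (π i)] [∀ i, PreconnectedSpace (π i)] (i : ι) (x : π i) :
    IsPreconnected {u : ∀ i, π i | u i = x} := by
  have h : {u : ∀ i, π i | u i = x} = range fun u => Function.update u i x :=
    ext fun u => ⟨fun hu => ⟨u, hu ▸ Function.update_eq_self i u⟩,
      by rintro ⟨v, rfl⟩; exact Function.update_self i x v⟩
  exact h ▸ isPreconnected_range (continuous_id.update i continuous_const)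

/-- The partial orbit set `O_F(x)|_[n]`. -/
def partialOrbit (F : X → Set X) (x : X) (n : ℕ) : Set (ℕ → X) :=
  {u | u 0 = x ∧ ∀ i < n, u (i + 1) ∈ F (u i)}

section PartialOrbit

variable {F : X → Set X} {x : X} {n : ℕ}

theorem orbitSet_subset_partialOrbit : OrbitSet F x ⊆ partialOrbit F x n :=
  fun _ hu => ⟨hu.1, fun i _ => hu.2 i⟩

theorem orbitSet_nonempty (hne : ∀ y, (F y).Nonempty) : (OrbitSet F x).Nonempty :=
  ⟨fun k => Nat.rec x (fun _ y => (hne y).some) k, rfl, fun _ => (hne _).some_mem⟩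

theorem partialOrbit_zero : partialOrbit F x 0 = {u | u 0 = x} := by
  simp [partialOrbit]

theorem partialOrbit_succ :
    partialOrbit F x (n + 1) =
      ⋃ u ∈ partialOrbit F x n, (fun y => Function.update u (n + 1) y) '' F (u n) := by
  ext v
  simp only [partialOrbit, mem_ofPred_eq, mem_iUnion, mem_image, exists_prop]
  constructor
  · rintro ⟨h0, hv⟩
    exact ⟨v, ⟨h0, fun i hi => hv i (by omega)⟩, v (n + 1), hv n n.lt_succ_self,
      Function.update_eq_self _ _⟩
  · rintro ⟨u, ⟨h0, hu⟩, y, hy, rfl⟩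
    refine ⟨by rwa [Function.update_of_ne (by omega)], fun i hi => ?_⟩
    rcases Nat.lt_succ_iff_lt_or_eq.mp hi with hi | rfl
    · rw [Function.update_of_ne (by omega), Function.update_of_ne (by omega)]
      exact hu i hi
    · rwa [Function.update_self, Function.update_of_ne (by omega)]

variable [TopologicalSpace X]

theorem isClosed_partialOrbit [T1Space X] (hG : IsClosed {p : X × X | p.2 ∈ F p.1}) :
    IsClosed (partialOrbit F x n) := by
  have hstep : ∀ i, IsClosed {u : ℕ → X | u (i + 1) ∈ F (u i)} := fun i =>
    hG.preimage (by fun_prop : Continuous fun u : ℕ → X => (u i, u (i + 1)))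
  simp only [partialOrbit, ofPred_and, ofPred_forall]
  exact (isClosed_singleton.preimage (continuous_apply 0)).inter <|
    isClosed_iInter fun i => isClosed_iInter fun _ => hstep i

theorem isPreconnected_partialOrbit [PreconnectedSpace X] (hcpt : ∀ y, IsCompact (F y))
    (hconn : ∀ y, IsConnected (F y)) (hF : UpperHemicontinuous F) :
    IsPreconnected (partialOrbit F x n) := by
  induction n with
  | zero =>
    rw [partialOrbit_zero]
    exact isPreconnected_setOf_apply_eq (π := fun _ => X) 0 x
  | succ n ih =>
    have hfibre : UpperHemicontinuous
        fun u : ℕ → X => (fun y => Function.update u (n + 1) y) '' F (u n) :=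
      have hFn : UpperHemicontinuous fun u : ℕ → X => F (u n) := hF.comp (continuous_apply n)
      hFn.image_of_isCompact (φ := fun u y => Function.update u (n + 1) y)
        (fun u => hcpt (u n)) (continuous_fst.update (n + 1) continuous_snd)
    rw [partialOrbit_succ]
    exact ih.biUnion_of_upperHemicontinuous hfibre fun u _ =>
      (hconn (u n)).image _ (continuous_const.update (n + 1) continuous_id :
        Continuous fun y : X => Function.update u (n + 1) y).continuousOn

end PartialOrbit

theorem stmt8_general [MetricSpace X] [CompactSpace X] [ConnectedSpace X] (F : X → Set X)
    (hcl : ∀ x, IsClosed (F x))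
    (hconn : ∀ x, IsConnected (F x)) (hF : USC F) (x : X) (n : ℕ) :
    IsCompact {u : ℕ → X | u 0 = x ∧ ∀ i < n, u (i + 1) ∈ F (u i)} ∧
      IsConnected {u : ℕ → X | u 0 = x ∧ ∀ i < n, u (i + 1) ∈ F (u i)} := by
  have hF' := hF.upperHemicontinuous
  have hclosed : IsClosed (partialOrbit F x n) :=
    isClosed_partialOrbit (hF'.isClosed_setOf_mem hcl)
  have hnonempty : (partialOrbit F x n).Nonempty :=
    (orbitSet_nonempty fun y => (hconn y).nonempty).mono orbitSet_subset_partialOrbit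
  exact ⟨hclosed.isCompact, hnonempty,
    isPreconnected_partialOrbit (fun y => (hcl y).isCompact) hconn hF'⟩

/-- The partial orbit sets `O_F(x)|_[n]` of an upper semicontinuous map with
connected values on a continuum are compact and connected. -/
theorem stmt8 [MetricSpace X] [CompactSpace X] [ConnectedSpace X] (F : X → Set X)
    (hne : ∀ x, (F x).Nonempty) (hcl : ∀ x, IsClosed (F x))
    (hconn : ∀ x, IsConnected (F x)) (hF : USC F) (x : X) (n : ℕ) :
    IsCompact {u : ℕ → X | u 0 = x ∧ ∀ i < n, u (i + 1) ∈ F (u i)} ∧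
      IsConnected {u : ℕ → X | u 0 = x ∧ ∀ i < n, u (i + 1) ∈ F (u i)} :=
  stmt8_general F hcl hconn hF x n
end

section
/- Let X be a continuum and F : X → 2^X upper semicontinuous such that F(x) is a finite set with at least two points for every x ∈ X. Then for every z ∈ X, the orbit set O_F(z) is homeomorphic to the Cantor set (i.e., it is a nonempty, compact, perfect, totally disconnected metric space). -/
open Set Topology Filter

variable {X : Type*}

/-!
The orbit set is cut out of `X^ℕ` by the closed conditions `u 0 = z` and
`(u n, u (n+1)) ∈ graph F`, the graph being closed by upper semicontinuity, so it is compact.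
Since `F` has nonempty values, every finite orbit segment extends to a full orbit; as each
`F x` has at least two points, the segment can be extended in two different ways, so no orbit
is isolated. Finally the `n`-th coordinates of all orbits lie in the finite set `F^n(z)`, so a
connected set of orbits has only one value in each coordinate.
-/

theorem USC.isClosed_graph [TopologicalSpace X] [T2Space X] {F : X → Set X} (hF : USC F)
    (hcpt : ∀ x, IsCompact (F x)) : IsClosed {p : X × X | p.2 ∈ F p.1} := by
  rw [← isOpen_compl_iff, isOpen_iff_mem_nhds]
  rintro ⟨x, y⟩ (hy : y ∉ F x)
  obtain ⟨W, V, hWo, hVo, hyW, hFV, hdis⟩ :=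
    SeparatedNhds.of_isCompact_isCompact isCompact_singleton (hcpt x)
      (disjoint_singleton_left.2 hy)
  obtain ⟨U, hUo, hxU, hU⟩ := hF x V hVo hFV
  filter_upwards [prod_mem_nhds (hUo.mem_nhds hxU) (hWo.mem_nhds (hyW rfl))]
  rintro ⟨a, b⟩ ⟨ha, hb⟩ hmem
  exact hdis.ne_of_mem hb (hU a ha hmem) rfl

theorem iterF_finite {F : X → Set X} (hfin : ∀ x, (F x).Finite) (z : X) (n : ℕ) :
    (IterF F n z).Finite := by
  induction n with
  | zero => exact finite_singleton z
  | succ n ih => exact ih.biUnion fun y _ => hfin y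

namespace OrbitSet

variable {F : X → Set X} {z : X}

theorem apply_mem_iterF {u : ℕ → X} (hu : u ∈ OrbitSet F z) (n : ℕ) : u n ∈ IterF F n z := by
  induction n with
  | zero => exact hu.1
  | succ n ih => exact mem_biUnion ih (hu.2 n)

theorem nonempty (hne : ∀ x, (F x).Nonempty) (z : X) : (OrbitSet F z).Nonempty := by
  choose g hg using hne
  refine ⟨fun n => g^[n] z, rfl, fun n => ?_⟩
  simpa only [Function.iterate_succ_apply'] using hg (g^[n] z)

theorem exists_agree_le_and_succ_eq (hne : ∀ x, (F x).Nonempty) {u : ℕ → X}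
    (hu : u ∈ OrbitSet F z) (N : ℕ) {w : X} (hw : w ∈ F (u N)) :
    ∃ v ∈ OrbitSet F z, (∀ i ≤ N, v i = u i) ∧ v (N + 1) = w := by
  obtain ⟨s, hs0, hs⟩ := nonempty hne w
  refine ⟨fun i => if i ≤ N then u i else s (i - (N + 1)), ⟨?_, fun n => ?_⟩,
    fun i hi => if_pos hi, by simpa using hs0⟩
  · simpa using hu.1
  · rcases lt_trichotomy n N with h | rfl | h
    · simpa [h.le, Nat.succ_le_of_lt h] using hu.2 n
    · simpa [hs0] using hw
    · have hshift : n + 1 - (N + 1) = n - (N + 1) + 1 := by omega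
      simpa [show ¬n ≤ N by omega, show ¬n + 1 ≤ N by omega, hshift] using hs (n - (N + 1))

theorem isClosed [TopologicalSpace X] [T2Space X] (hF : USC F) (hcpt : ∀ x, IsCompact (F x))
    (z : X) : IsClosed (OrbitSet F z) := by
  have heq : OrbitSet F z = (fun u : ℕ → X => u 0) ⁻¹' {z} ∩
      ⋂ n, (fun u : ℕ → X => (u n, u (n + 1))) ⁻¹' {p : X × X | p.2 ∈ F p.1} := by
    ext u
    simp [OrbitSet]
  rw [heq]
  exact (isClosed_singleton.preimage (continuous_apply 0)).inter
    (isClosed_iInter fun n => (hF.isClosed_graph hcpt).preimage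
      ((continuous_apply n).prodMk (continuous_apply (n + 1))))

theorem preperfect [TopologicalSpace X] (hnt : ∀ x, (F x).Nontrivial) (z : X) :
    Preperfect (OrbitSet F z) := by
  rw [preperfect_iff_nhds]
  intro u hu U hU
  rw [nhds_pi, Filter.mem_pi] at hU
  obtain ⟨I, hIfin, t, ht, hIt⟩ := hU
  obtain ⟨N, hN⟩ := hIfin.bddAbove
  obtain ⟨w, hwF, hwne⟩ := (hnt (u N)).exists_ne (u (N + 1))
  obtain ⟨v, hv, hvu, hvN⟩ := exists_agree_le_and_succ_eq (fun x => (hnt x).nonempty) hu N hwF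
  refine ⟨v, ⟨hIt fun i hi => ?_, hv⟩, fun h => hwne (h ▸ hvN).symm⟩
  rw [hvu i (hN hi)]
  exact mem_of_mem_nhds (ht i)

theorem isTotallyDisconnected [MetricSpace X] (hfin : ∀ x, (F x).Finite) (z : X) :
    IsTotallyDisconnected (OrbitSet F z) := by
  intro t hts hconn u hu v hv
  funext n
  have hcoord : (fun w : ℕ → X => w n) '' t ⊆ IterF F n z := by
    rintro _ ⟨w, hw, rfl⟩
    exact apply_mem_iterF (hts hw) n
  exact (iterF_finite hfin z n).countable.isTotallyDisconnected _ hcoord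
    (hconn.image _ (continuous_apply n).continuousOn) ⟨u, hu, rfl⟩ ⟨v, hv, rfl⟩

end OrbitSet

theorem stmt10_general [MetricSpace X] [CompactSpace X] (F : X → Set X)
    (hfin : ∀ x, (F x).Finite) (hnt : ∀ x, (F x).Nontrivial) (hF : USC F) (z : X) :
    (OrbitSet F z).Nonempty ∧ IsCompact (OrbitSet F z) ∧
      Perfect (OrbitSet F z) ∧ IsTotallyDisconnected (OrbitSet F z) := by
  have hclosed := OrbitSet.isClosed hF (fun x => (hfin x).isCompact) z
  exact ⟨OrbitSet.nonempty (fun x => (hnt x).nonempty) z, hclosed.isCompact,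
    ⟨hclosed, OrbitSet.preperfect hnt z⟩, OrbitSet.isTotallyDisconnected hfin z⟩

/-- If every value of `F` is finite with at least two points, then every orbit set
is a Cantor set: nonempty, compact, perfect and totally disconnected. -/
theorem stmt10 [MetricSpace X] [CompactSpace X] [ConnectedSpace X] (F : X → Set X)
    (hfin : ∀ x, (F x).Finite) (hnt : ∀ x, (F x).Nontrivial) (hF : USC F) (z : X) :
    (OrbitSet F z).Nonempty ∧ IsCompact (OrbitSet F z) ∧
      Perfect (OrbitSet F z) ∧ IsTotallyDisconnected (OrbitSet F z) :=
  stmt10_general F hfin hnt hF z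
end

section
/- Let X be a continuum and f_1, …, f_k : X → X continuous surjections such that f_1^{-1}(x_0) ∩ ⋯ ∩ f_k^{-1}(x_0) ≠ ∅ for some x_0 ∈ X. With F(x) = f_1^{-1}(x) ∪ ⋯ ∪ f_k^{-1}(x), the set ⋃_{x ∈ X} O_F(x) ⊆ X^ℕ is a continuum (compact and connected). -/
open Set Topology Filter

variable {X : Type*}

/-!
A sequence lies in some orbit set exactly when `u n = f i (u (n + 1))` holds, for some `i`,
at every step, so the union of the orbit sets is the decreasing intersection of the closed
sets `A m = chainsUpTo f m` of sequences satisfying this at the first `m` steps. Each `A m`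
is connected by induction: `A (m + 1)` is the union over `i` of the continuous images of
`A m` under `v ↦ (f i (v 0), v 0, v 1, …)`, and these images share the point `(x₀, y₀, …)`
whenever `y₀` lies in every fibre `f i ⁻¹' {x₀}`. A decreasing intersection of continua is
a continuum.
-/

theorem IsPreconnected.iInter_of_directed_isCompact {α ι : Type*} [TopologicalSpace α]
    [T2Space α] [Nonempty ι] {A : ι → Set α} (hdir : Directed (· ⊇ ·) A)
    (hcomp : ∀ i, IsCompact (A i)) (hconn : ∀ i, IsPreconnected (A i)) :
    IsPreconnected (⋂ i, A i) := by
  set K := ⋂ i, A i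
  have hKcomp : IsCompact K :=
    (hcomp (Classical.arbitrary ι)).of_isClosed_subset
      (isClosed_iInter fun i => (hcomp i).isClosed) (iInter_subset A _)
  rw [isPreconnected_iff_subset_of_fully_disjoint_closed hKcomp.isClosed]
  intro t₁ t₂ ht₁ ht₂ hcover hdisj
  obtain ⟨U, V, hU, hV, hKU, hKV, hUV⟩ :=
    SeparatedNhds.of_isCompact_isCompact (hKcomp.inter_right ht₁) (hKcomp.inter_right ht₂)
      (hdisj.mono inter_subset_right inter_subset_right)
  have hKUV : K ⊆ U ∪ V := fun x hx =>
    (hcover hx).imp (fun h => hKU ⟨hx, h⟩) (fun h => hKV ⟨hx, h⟩)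
  -- Compactness pushes some `A i` into the neighbourhood `U ∪ V` of `K`.
  obtain ⟨i, hi⟩ := exists_subset_nhds_of_isCompact hdir hcomp
    fun x hx => (hU.union hV).mem_nhds (hKUV hx)
  rcases (hconn i).subset_or_subset hU hV hUV hi with hiU | hiV
  · refine Or.inl fun x hx => (hcover hx).resolve_right fun hx₂ => ?_
    exact hUV.notMem_of_mem_left (hiU (iInter_subset A i hx)) (hKV ⟨hx, hx₂⟩)
  · refine Or.inr fun x hx => (hcover hx).resolve_left fun hx₁ => ?_
    exact hUV.notMem_of_mem_left (hKU ⟨hx, hx₁⟩) (hiV (iInter_subset A i hx))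

theorem IsConnected.iInter_of_directed_isCompact {α ι : Type*} [TopologicalSpace α]
    [T2Space α] [Nonempty ι] {A : ι → Set α} (hdir : Directed (· ⊇ ·) A)
    (hcomp : ∀ i, IsCompact (A i)) (hconn : ∀ i, IsConnected (A i)) :
    IsConnected (⋂ i, A i) :=
  ⟨IsCompact.nonempty_iInter_of_directed_nonempty_isCompact_isClosed A hdir
      (fun i => (hconn i).nonempty) hcomp fun i => (hcomp i).isClosed,
    IsPreconnected.iInter_of_directed_isCompact hdir hcomp fun i => (hconn i).isPreconnected⟩

section Chains

variable {ι : Type*} (f : ι → X → X)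

def chainsUpTo (m : ℕ) : Set (ℕ → X) :=
  {u | ∀ n < m, ∃ i, f i (u (n + 1)) = u n}

def prependImage (i : ι) (v : ℕ → X) : ℕ → X
  | 0 => f i (v 0)
  | n + 1 => v n

theorem iUnion_orbitSet_eq_iInter_chainsUpTo :
    ⋃ x, OrbitSet (fun x => ⋃ i, f i ⁻¹' {x}) x = ⋂ m, chainsUpTo f m := by
  ext u
  simp only [mem_iUnion, mem_iInter, OrbitSet, chainsUpTo, mem_ofPred_eq, mem_preimage,
    mem_singleton_iff]
  exact ⟨fun ⟨_, _, hu⟩ _ n _ => hu n,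
    fun hu => ⟨u 0, rfl, fun n => hu (n + 1) n n.lt_succ_self⟩⟩

theorem chainsUpTo_zero : chainsUpTo f 0 = univ :=
  eq_univ_of_forall fun _ n hn => absurd hn n.not_lt_zero

theorem chainsUpTo_antitone : Antitone (chainsUpTo f) :=
  fun _ _ hlm _ hu n hn => hu n (lt_of_lt_of_le hn hlm)

theorem chainsUpTo_succ (m : ℕ) :
    chainsUpTo f (m + 1) = ⋃ i, prependImage f i '' chainsUpTo f m := by
  ext u
  simp only [mem_iUnion, mem_image]
  constructor
  · intro hu
    obtain ⟨i, hi⟩ := hu 0 m.succ_pos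
    refine ⟨i, fun n => u (n + 1), fun n hn => hu (n + 1) (Nat.succ_lt_succ hn), ?_⟩
    funext n
    cases n with
    | zero => exact hi
    | succ n => rfl
  · rintro ⟨i, v, hv, rfl⟩ n hn
    cases n with
    | zero => exact ⟨i, rfl⟩
    | succ n => exact hv n (Nat.lt_of_succ_lt_succ hn)

theorem exists_chain_from (hs : ∀ i, Function.Surjective (f i)) (i : ι) (z : X) :
    ∃ u : ℕ → X, u 0 = z ∧ ∀ n, f i (u (n + 1)) = u n :=
  ⟨fun n => (Function.surjInv (hs i))^[n] z, rfl, fun n => by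
    simp only [Function.iterate_succ_apply']
    exact Function.surjInv_eq (hs i) _⟩

variable [TopologicalSpace X]

theorem continuous_prependImage {i : ι} (hc : Continuous (f i)) :
    Continuous (prependImage f i) :=
  continuous_pi fun n => by
    cases n with
    | zero => exact hc.comp (continuous_apply 0)
    | succ n => exact continuous_apply n

theorem isClosed_chainsUpTo [T2Space X] [Finite ι] (hc : ∀ i, Continuous (f i)) (m : ℕ) :
    IsClosed (chainsUpTo f m) := by
  simp only [chainsUpTo, ofPred_forall, ofPred_exists]
  exact isClosed_iInter fun n => isClosed_iInter fun _ => isClosed_iUnion_of_finite fun i =>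
    isClosed_eq ((hc i).comp (continuous_apply (n + 1))) (continuous_apply n)

theorem isConnected_chainsUpTo [ConnectedSpace X] [Nonempty ι]
    (hc : ∀ i, Continuous (f i)) (hs : ∀ i, Function.Surjective (f i)) {x₀ y₀ : X}
    (hy₀ : ∀ i, f i y₀ = x₀) (m : ℕ) :
    IsConnected (chainsUpTo f m) := by
  induction m with
  | zero => simpa only [chainsUpTo_zero] using isConnected_univ
  | succ m ih =>
    obtain ⟨i₀⟩ := ‹Nonempty ι›
    obtain ⟨v, hv₀, hv⟩ := exists_chain_from f hs i₀ y₀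
    have hcommon : ∀ i, prependImage f i v = prependImage f i₀ v := fun i => by
      funext n
      cases n with
      | zero => simp only [prependImage, hv₀, hy₀]
      | succ n => rfl
    have hmem : prependImage f i₀ v ∈ ⋂ i, prependImage f i '' chainsUpTo f m :=
      mem_iInter.2 fun i => ⟨v, fun n _ => ⟨i₀, hv n⟩, hcommon i⟩
    rw [chainsUpTo_succ]
    exact ⟨⟨_, mem_iUnion.2 ⟨i₀, mem_iInter.1 hmem i₀⟩⟩,
      isPreconnected_iUnion ⟨_, hmem⟩ fun i =>
        (ih.image _ (continuous_prependImage f (hc i)).continuousOn).isPreconnected⟩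

end Chains

/-- If the `f_i` are continuous surjections of a continuum with a common point in
some fiber, then the union of all orbit sets of `F(x) = ⋃ᵢ fᵢ⁻¹(x)` is a continuum. -/
theorem stmt13 [MetricSpace X] [CompactSpace X] [ConnectedSpace X]
    (k : ℕ) (hk : 0 < k) (f : Fin k → X → X)
    (hc : ∀ i, Continuous (f i)) (hs : ∀ i, Function.Surjective (f i))
    (x₀ : X) (h0 : (⋂ i : Fin k, f i ⁻¹' {x₀}).Nonempty) :
    IsCompact (⋃ x : X, OrbitSet (fun x => ⋃ i : Fin k, f i ⁻¹' {x}) x) ∧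
      IsConnected (⋃ x : X, OrbitSet (fun x => ⋃ i : Fin k, f i ⁻¹' {x}) x) := by
  have : Nonempty (Fin k) := ⟨⟨0, hk⟩⟩
  obtain ⟨y₀, hy₀⟩ := h0
  have hfy₀ : ∀ i, f i y₀ = x₀ := fun i => mem_iInter.1 hy₀ i
  have hclosed := isClosed_chainsUpTo f hc
  rw [iUnion_orbitSet_eq_iInter_chainsUpTo]
  exact ⟨(isClosed_iInter hclosed).isCompact,
    IsConnected.iInter_of_directed_isCompact (chainsUpTo_antitone f).directed_ge
      (fun m => (hclosed m).isCompact) (isConnected_chainsUpTo f hc hs hfy₀)⟩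
end

section
/- Let X be a compact metric space with no isolated points and F : X → 2^X upper semicontinuous. If some p ∈ X has a dense orbit (there exists (x_n) ∈ O_F(p) such that {x_n : n ∈ ℕ} is dense in X), then F is transitive: for every pair of nonempty open sets U, V ⊆ X there exist x ∈ U and k ∈ ℕ with F^k(x) ∩ V ≠ ∅. -/
open Set Topology Filter

variable {X : Type*}

theorem mem_iterF_of_forall_succ_mem {F : X → Set X} {u : ℕ → X}
    (hu : ∀ n, u (n + 1) ∈ F (u n)) (n : ℕ) : ∀ k, u (n + k) ∈ IterF F k (u n)
  | 0 => rfl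
  | k + 1 => mem_biUnion (mem_iterF_of_forall_succ_mem hu n k) (hu (n + k))

theorem exists_lt_apply_mem_of_dense_range [TopologicalSpace X] [T1Space X]
    [∀ x : X, NeBot (𝓝[≠] x)] {u : ℕ → X} (hu : Dense (range u)) {V : Set X} (hVo : IsOpen V) (hVne : V.Nonempty)
    (n : ℕ) : ∃ m, n < m ∧ u m ∈ V := by
  have htail : Dense (range u \ u '' Iic n) := hu.sdiff_finite ((finite_Iic n).image u)
  obtain ⟨_, ⟨⟨m, rfl⟩, hm⟩, hmV⟩ := htail.exists_mem_open hVo hVne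
  exact ⟨m, lt_of_not_ge fun hmn => hm ⟨m, hmn, rfl⟩, hmV⟩

theorem stmt14_general [MetricSpace X]
    (hiso : ∀ x : X, Filter.NeBot (nhdsWithin x {x}ᶜ))
    (F : X → Set X) (p : X) (u : ℕ → X) (hu : u ∈ OrbitSet F p)
    (hdense : Dense (Set.range u)) :
    ∀ U V : Set X, IsOpen U → U.Nonempty → IsOpen V → V.Nonempty →
      ∃ x ∈ U, ∃ m : ℕ, 0 < m ∧ (IterF F m x ∩ V).Nonempty := by
  intro U V hUo hUne hVo hVne
  have := hiso
  obtain ⟨_, ⟨n, rfl⟩, hnU⟩ := hdense.exists_mem_open hUo hUne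
  obtain ⟨m, hnm, hmV⟩ := exists_lt_apply_mem_of_dense_range hdense hVo hVne n
  obtain ⟨k, rfl⟩ := Nat.exists_eq_add_of_lt hnm
  exact ⟨u n, hnU, k + 1, k.succ_pos, u (n + k + 1),
    mem_iterF_of_forall_succ_mem hu.2 n (k + 1), hmV⟩

/-- On a compactum without isolated points, the existence of a point with a dense
orbit implies transitivity. -/
theorem stmt14 [MetricSpace X] [CompactSpace X]
    (hiso : ∀ x : X, Filter.NeBot (nhdsWithin x {x}ᶜ))
    (F : X → Set X) (hne : ∀ x, (F x).Nonempty) (hcl : ∀ x, IsClosed (F x))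
    (hF : USC F) (p : X) (u : ℕ → X) (hu : u ∈ OrbitSet F p)
    (hdense : Dense (Set.range u)) :
    ∀ U V : Set X, IsOpen U → U.Nonempty → IsOpen V → V.Nonempty →
      ∃ x ∈ U, ∃ m : ℕ, 0 < m ∧ (IterF F m x ∩ V).Nonempty :=
  stmt14_general hiso F p u hu hdense
end

section
/- Let X be a compact metric space and F : X → 2^X upper semicontinuous. Then F is dense minimal (every point of X has a dense orbit) if and only if F is weak dense minimal (for every x ∈ X and every nonempty open U ⊆ X, there is k ∈ ℕ with F^k(x) ∩ U ≠ ∅). -/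
/-! For the nontrivial direction, fix a countable basis `e 0, e 1, …` and build one orbit that
visits the basic sets in turn. While aiming at `e k`, always step to a point from which `e k` is
reached in strictly fewer steps (the hitting time drops by one along a shortest path); once inside
`e k`, step anywhere and aim at `e (k + 1)`. -/

open Set Topology Filter

variable {X : Type*}

namespace IterF

variable (F : X → Set X)

theorem succ_eq_biUnion_apply (n : ℕ) (x : X) :
    IterF F (n + 1) x = ⋃ y ∈ F x, IterF F n y := by
  induction n generalizing x with
  | zero => simp [IterF]
  | succ n ih =>
    change ⋃ z ∈ IterF F (n + 1) x, F z = _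
    rw [ih]
    simp only [biUnion_iUnion]
    rfl

variable {F}

theorem subset_succ_of_mem {x y : X} (hy : y ∈ F x) (n : ℕ) :
    IterF F n y ⊆ IterF F (n + 1) x := by
  rw [succ_eq_biUnion_apply]
  exact subset_biUnion_of_mem hy

theorem nonempty_apply_of_nonempty {n : ℕ} {x : X} (h : (IterF F (n + 1) x).Nonempty) :
    (F x).Nonempty := by
  obtain ⟨w, hw⟩ := h
  rw [succ_eq_biUnion_apply] at hw
  obtain ⟨y, hy, -⟩ := mem_iUnion₂.mp hw
  exact ⟨y, hy⟩

theorem mem_of_mem_orbitSet {z : X} {u : ℕ → X} (hu : u ∈ OrbitSet F z) (n : ℕ) :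
    u n ∈ IterF F n z := by
  induction n with
  | zero => exact hu.1
  | succ n ih => exact mem_biUnion ih (hu.2 n)

end IterF

/-- It is `0` also when `s` is unreachable from `z` (`sInf ∅ = 0`). -/
noncomputable def hittingTime (F : X → Set X) (z : X) (s : Set X) : ℕ :=
  sInf {m | (IterF F m z ∩ s).Nonempty}

theorem exists_mem_hittingTime_lt {F : X → Set X} {z : X} {s : Set X}
    (hs : ∃ m, (IterF F m z ∩ s).Nonempty) (hz : z ∉ s) :
    ∃ y ∈ F z, hittingTime F y s < hittingTime F z s := by
  obtain ⟨w, hw, hws⟩ : (IterF F (hittingTime F z s) z ∩ s).Nonempty := Nat.sInf_mem hs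
  obtain ⟨d, hd⟩ : ∃ d, hittingTime F z s = d + 1 := by
    refine Nat.exists_eq_succ_of_ne_zero fun h0 => hz ?_
    rw [h0] at hw
    exact (mem_singleton_iff.mp hw) ▸ hws
  rw [hd, IterF.succ_eq_biUnion_apply] at hw
  obtain ⟨y, hy, hwy⟩ := mem_iUnion₂.mp hw
  exact ⟨y, hy, hd ▸ Nat.lt_succ_of_le (Nat.sInf_le ⟨w, hwy, hws⟩)⟩

/-- `σ n` is a state `(point, index of the current target)`. -/
theorem forall_exists_mem_of_hit_or_descend {e : ℕ → Set X} (μ : X → ℕ → ℕ)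
    (σ : ℕ → X × ℕ) (h0 : (σ 0).2 = 0)
    (hhit : ∀ n, (σ n).1 ∈ e (σ n).2 → (σ (n + 1)).2 = (σ n).2 + 1)
    (hmiss : ∀ n, (σ n).1 ∉ e (σ n).2 →
      (σ (n + 1)).2 = (σ n).2 ∧ μ (σ (n + 1)).1 (σ n).2 < μ (σ n).1 (σ n).2)
    (k : ℕ) : ∃ n, (σ n).1 ∈ e k := by
  have hits_current : ∀ n, ∃ n', (σ n').2 = (σ n).2 ∧ (σ n').1 ∈ e (σ n).2 := by
    intro n
    induction hμ : μ (σ n).1 (σ n).2 using Nat.strong_induction_on generalizing n with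
    | _ d ih =>
      by_cases hn : (σ n).1 ∈ e (σ n).2
      · exact ⟨n, rfl, hn⟩
      · obtain ⟨hsame, hlt⟩ := hmiss n hn
        obtain ⟨n', hn'⟩ := ih _ (hμ ▸ hsame ▸ hlt) (n + 1) rfl
        exact ⟨n', hsame ▸ hn'⟩
  have reaches : ∀ k, ∃ n, (σ n).2 = k := by
    intro k
    induction k with
    | zero => exact ⟨0, h0⟩
    | succ k ih =>
      obtain ⟨n, rfl⟩ := ih
      obtain ⟨n', hn'2, hn'e⟩ := hits_current n
      exact ⟨n' + 1, hn'2 ▸ hhit n' (hn'2 ▸ hn'e)⟩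
  obtain ⟨n, rfl⟩ := reaches k
  obtain ⟨n', -, hn'⟩ := hits_current n
  exact ⟨n', hn'⟩

theorem exists_mem_orbitSet_forall_exists_mem {F : X → Set X} (hne : ∀ x, (F x).Nonempty)
    {e : ℕ → Set X} (he : ∀ z k, ∃ m, (IterF F m z ∩ e k).Nonempty) (p : X) :
    ∃ u ∈ OrbitSet F p, ∀ k, ∃ n, u n ∈ e k := by
  have step : ∀ s : X × ℕ, ∃ t : X × ℕ, t.1 ∈ F s.1 ∧ (s.1 ∈ e s.2 → t.2 = s.2 + 1) ∧
      (s.1 ∉ e s.2 →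
        t.2 = s.2 ∧ hittingTime F t.1 (e s.2) < hittingTime F s.1 (e s.2)) := by
    rintro ⟨z, k⟩
    by_cases hz : z ∈ e k
    · obtain ⟨y, hy⟩ := hne z
      exact ⟨(y, k + 1), hy, fun _ => rfl, fun h => absurd hz h⟩
    · obtain ⟨y, hy, hlt⟩ := exists_mem_hittingTime_lt (he z k) hz
      exact ⟨(y, k), hy, fun h => absurd h hz, fun _ => ⟨rfl, hlt⟩⟩
  choose next hnext using step
  set σ : ℕ → X × ℕ := fun n => next^[n] (p, 0)
  have hσ_succ : ∀ n, σ (n + 1) = next (σ n) := fun n => Function.iterate_succ_apply' _ _ _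
  refine ⟨fun n => (σ n).1, ⟨rfl, fun n => ?_⟩, ?_⟩
  · change (σ (n + 1)).1 ∈ F (σ n).1
    exact hσ_succ n ▸ (hnext (σ n)).1
  · exact forall_exists_mem_of_hit_or_descend (fun z k => hittingTime F z (e k)) σ rfl
      (fun n => hσ_succ n ▸ (hnext (σ n)).2.1) (fun n => hσ_succ n ▸ (hnext (σ n)).2.2)

theorem exists_mem_orbitSet_dense_range [TopologicalSpace X] [SecondCountableTopology X]
    {F : X → Set X} (hne : ∀ x, (F x).Nonempty)
    (H : ∀ x U, IsOpen U → U.Nonempty → ∃ m, (IterF F m x ∩ U).Nonempty) (p : X) :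
    ∃ u ∈ OrbitSet F p, Dense (range u) := by
  obtain ⟨b, hbc, hb_empty, hb⟩ := TopologicalSpace.exists_countable_basis X
  obtain ⟨o, hob, -⟩ := mem_sUnion.mp (hb.sUnion_eq.symm ▸ mem_univ p)
  obtain ⟨e, rfl⟩ := hbc.exists_eq_range ⟨o, hob⟩
  have he : ∀ z k, ∃ m, (IterF F m z ∩ e k).Nonempty := fun z k =>
    H z (e k) (hb.isOpen ⟨k, rfl⟩) (nonempty_iff_ne_empty.mpr fun h => hb_empty (h ▸ ⟨k, rfl⟩))
  obtain ⟨u, hu, hhit⟩ := exists_mem_orbitSet_forall_exists_mem hne he p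
  refine ⟨u, hu, hb.dense_iff.mpr ?_⟩
  rintro _ ⟨k, rfl⟩ -
  obtain ⟨n, hn⟩ := hhit k
  exact ⟨u n, hn, n, rfl⟩

theorem exists_pos_iterF_inter_nonempty [TopologicalSpace X] {F : X → Set X}
    (H : ∀ p : X, ∃ u ∈ OrbitSet F p, Dense (range u)) (x : X) {U : Set X} (hU : IsOpen U)
    (hU_ne : U.Nonempty) : ∃ m, 0 < m ∧ (IterF F m x ∩ U).Nonempty := by
  obtain ⟨u, hu, -⟩ := H x
  obtain ⟨v, hv, hv_dense⟩ := H (u 1)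
  obtain ⟨-, hvU, n, rfl⟩ := hv_dense.inter_open_nonempty U hU hU_ne
  have hx : u 1 ∈ F x := hu.1 ▸ hu.2 0
  exact ⟨n + 1, n.succ_pos, v n, IterF.subset_succ_of_mem hx n (IterF.mem_of_mem_orbitSet hv n), hvU⟩

theorem stmt16_general [MetricSpace X] [CompactSpace X]
    (F : X → Set X) :
    (∀ p : X, ∃ u ∈ OrbitSet F p, Dense (Set.range u)) ↔
      (∀ x : X, ∀ U : Set X, IsOpen U → U.Nonempty →
        ∃ m : ℕ, 0 < m ∧ (IterF F m x ∩ U).Nonempty) := by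
  refine ⟨fun H x U hU hU_ne => exists_pos_iterF_inter_nonempty H x hU hU_ne, fun H => ?_⟩
  have hne : ∀ x, (F x).Nonempty := fun x => by
    obtain ⟨m, hm, hxm⟩ := H x univ isOpen_univ ⟨x, trivial⟩
    obtain ⟨n, rfl⟩ := Nat.exists_eq_succ_of_ne_zero hm.ne'
    exact IterF.nonempty_apply_of_nonempty (hxm.mono inter_subset_left)
  exact exists_mem_orbitSet_dense_range hne fun x U hU hU_ne =>
    (H x U hU hU_ne).imp fun _ => And.right

/-- `F` is dense minimal iff it is weak dense minimal. -/
theorem stmt16 [MetricSpace X] [CompactSpace X]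
    (F : X → Set X) (hne : ∀ x, (F x).Nonempty) (hcl : ∀ x, IsClosed (F x))
    (hF : USC F) :
    (∀ p : X, ∃ u ∈ OrbitSet F p, Dense (Set.range u)) ↔
      (∀ x : X, ∀ U : Set X, IsOpen U → U.Nonempty →
        ∃ m : ℕ, 0 < m ∧ (IterF F m x ∩ U).Nonempty) :=
  stmt16_general F
end
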